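/- arXiv:1511.04626 — 2 statements merged into one kernel-verified Lean document; each statement's English description precedes it below -/
import Mathlib

section
/- Suppose there exists a measurable set Λ_α ⊆ Λ with Lebesgue measure strictly greater than α such that the p-value test is consistent on Λ_α, i.e. ℙ(p_n(λ) < α) → 1 as n → ∞ for every λ ∈ Λ_α. Then the PVOT test is consistent: ℙ(𝓟ₙ*(α) > α) → 1 as n → ∞. -/
/-!
For each outcome ω, the occupation time is at least vol(Λα) minus the mass M_n(ω) of the points
of Λα where the p-value test does not reject. By Tonelli, E[M_n] = ∫_{Λα} ℙ(p_n(λ) ≥ α) dλ, which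
tends to 0 by dominated convergence. Markov's inequality then gives M_n < vol(Λα) - α with
probability tending to 1, and on that event the occupation time exceeds α.
-/

open MeasureTheory ProbabilityTheory Filter Topology ENNReal

section

variable {Ω : Type*} [MeasurableSpace Ω] {μ : Measure Ω} {ι : Type*} {l : Filter ι}

theorem tendsto_measure_compl_nhds_zero [IsProbabilityMeasure μ] {s : ι → Set Ω}
    (hs : ∀ i, MeasurableSet (s i)) (h : Tendsto (fun i => μ (s i)) l (𝓝 1)) :
    Tendsto (fun i => μ (s i)ᶜ) l (𝓝 0) := by
  simp_rw [prob_compl_eq_one_sub (hs _)]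
  simpa using ENNReal.Tendsto.sub tendsto_const_nhds h (Or.inl one_ne_top)

theorem tendsto_measure_nhds_one_of_compl_subset [IsProbabilityMeasure μ] {s t : ι → Set Ω}
    (ht : Tendsto (fun i => μ (t i)) l (𝓝 0)) (hst : ∀ i, (s i)ᶜ ⊆ t i) :
    Tendsto (fun i => μ (s i)) l (𝓝 1) := by
  have hlower : ∀ i, 1 - μ (t i) ≤ μ (s i) := fun i => by
    rw [tsub_le_iff_right, ← measure_univ (μ := μ)]
    calc μ Set.univ ≤ μ (s i) + μ (s i)ᶜ := measure_univ_le_add_compl (s i)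
      _ ≤ μ (s i) + μ (t i) := by gcongr; exact hst i
  refine tendsto_of_tendsto_of_tendsto_of_le_of_le ?_ tendsto_const_nhds hlower
    fun _ => prob_le_one
  simpa using ENNReal.Tendsto.sub tendsto_const_nhds ht (Or.inl one_ne_top)

theorem tendsto_measure_le_of_tendsto_lintegral {f : ι → Ω → ℝ≥0∞}
    (hf : ∀ i, AEMeasurable (f i) μ) (h : Tendsto (fun i => ∫⁻ ω, f i ω ∂μ) l (𝓝 0))
    {ε : ℝ≥0∞} (hε : ε ≠ 0) (hε' : ε ≠ ∞) :
    Tendsto (fun i => μ {ω | ε ≤ f i ω}) l (𝓝 0) := by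
  have hdiv : Tendsto (fun i => (∫⁻ ω, f i ω ∂μ) / ε) l (𝓝 0) := by
    simpa using ENNReal.Tendsto.div_const h (Or.inr hε)
  exact tendsto_of_tendsto_of_tendsto_of_le_of_le tendsto_const_nhds hdiv (fun _ => zero_le)
    fun i => meas_ge_le_lintegral_div (hf i) hε hε'

theorem lt_measure_inter_of_measure_sdiff_lt {s t u : Set Ω} (hts : t ⊆ s) {a : ℝ≥0∞}
    (h : μ (t \ u) < μ t - a) : a < μ (u ∩ s) := by
  have hsub : t ∩ u ⊆ u ∩ s := fun x hx => ⟨hx.2, hts hx.1⟩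
  have hsplit : μ t ≤ μ (u ∩ s) + μ (t \ u) :=
    (measure_le_inter_add_sdiff μ t u).trans (add_le_add (measure_mono hsub) le_rfl)
  have hfin : μ (t \ u) ≠ ∞ := h.ne_top
  rw [lt_tsub_iff_left] at h
  exact (ENNReal.add_lt_add_iff_right hfin).1 (h.trans_le hsplit)

theorem setIntegral_ite_lt_eq_measureReal {f : Ω → ℝ} (hf : Measurable f) (s : Set Ω) (a : ℝ) :
    ∫ x in s, (if f x < a then (1 : ℝ) else 0) ∂μ = μ.real ({x | f x < a} ∩ s) := by
  have hmeas : MeasurableSet {x | f x < a} := measurableSet_lt hf measurable_const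
  rw [← measureReal_restrict_apply hmeas, ← integral_indicator_one hmeas]
  simp [Set.indicator_apply]

end

section

variable {X Ω : Type*} [MeasurableSpace X] [MeasurableSpace Ω] {μ : Measure X} {ν : Measure Ω}
  [IsFiniteMeasure μ] [IsFiniteMeasure ν] {ι : Type*} {l : Filter ι} [l.IsCountablyGenerated]

theorem tendsto_measure_prod_of_ae_tendsto_measure_prodMk {S : ι → Set (X × Ω)}
    (hS : ∀ i, MeasurableSet (S i))
    (h : ∀ᵐ x ∂μ, Tendsto (fun i => ν (Prod.mk x ⁻¹' S i)) l (𝓝 0)) :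
    Tendsto (fun i => μ.prod ν (S i)) l (𝓝 0) := by
  simp_rw [Measure.prod_apply (hS _)]
  simpa using tendsto_lintegral_filter_of_dominated_convergence (fun _ => ν Set.univ)
    (Eventually.of_forall fun i => measurable_measure_prodMk_left (hS i))
    (Eventually.of_forall fun _ => ae_of_all _ fun _ => measure_mono (Set.subset_univ _))
    (by simpa using mul_ne_top (measure_ne_top ν _) (measure_ne_top μ _)) h

theorem tendsto_measure_le_measure_prodMk_right_of_ae_tendsto {S : ι → Set (X × Ω)}
    (hS : ∀ i, MeasurableSet (S i))
    (h : ∀ᵐ x ∂μ, Tendsto (fun i => ν (Prod.mk x ⁻¹' S i)) l (𝓝 0))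
    {ε : ℝ≥0∞} (hε : ε ≠ 0) (hε' : ε ≠ ∞) :
    Tendsto (fun i => ν {ω | ε ≤ μ ((·, ω) ⁻¹' S i)}) l (𝓝 0) := by
  refine tendsto_measure_le_of_tendsto_lintegral
    (fun i => (measurable_measure_prodMk_right (hS i)).aemeasurable) ?_ hε hε'
  simpa only [← Measure.prod_apply_symm (hS _)] using
    tendsto_measure_prod_of_ae_tendsto_measure_prodMk hS h

end

theorem pvot_test_consistent_general
    {Ω : Type*} [MeasurableSpace Ω] (Pr : Measure Ω) [IsProbabilityMeasure Pr]
    {k : ℕ} (Λ : Set (Fin k → ℝ)) (hΛ1 : volume Λ = 1)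
    (p : ℕ → (Fin k → ℝ) → Ω → ℝ)
    (hp_meas : ∀ n, Measurable (fun q : (Fin k → ℝ) × Ω => p n q.1 q.2))
    (α : ℝ) (hα : α ∈ Set.Ioo (0 : ℝ) 1)
    (Λα : Set (Fin k → ℝ)) (hΛα_meas : MeasurableSet Λα) (hΛα_sub : Λα ⊆ Λ)
    (hΛα_big : ENNReal.ofReal α < volume Λα)
    (hconsistent : ∀ lam ∈ Λα,
      Tendsto (fun n => Pr {ω | p n lam ω < α}) atTop (nhds 1)) :
    Tendsto (fun n => Pr {ω | α < ∫ lam in Λ, (if p n lam ω < α then (1 : ℝ) else 0)})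
      atTop (nhds 1) := by
  have hΛ_fin : volume Λ ≠ ∞ := by simp [hΛ1]
  have hΛα_fin : volume Λα ≠ ∞ := ne_top_of_le_ne_top hΛ_fin (measure_mono hΛα_sub)
  have : IsFiniteMeasure (volume.restrict Λα) := isFiniteMeasure_restrict.2 hΛα_fin
  have hrej : ∀ n, MeasurableSet {q : (Fin k → ℝ) × Ω | p n q.1 q.2 < α} := fun n =>
    measurableSet_lt (hp_meas n) measurable_const
  set ε := volume Λα - ENNReal.ofReal α
  have hmiss := tendsto_measure_le_measure_prodMk_right_of_ae_tendsto (μ := volume.restrict Λα)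
    (fun n => (hrej n).compl)
    (ae_restrict_of_forall_mem hΛα_meas fun lam hlam => tendsto_measure_compl_nhds_zero
      (fun n => measurable_prodMk_left (hrej n)) (hconsistent lam hlam))
    (tsub_pos_of_lt hΛα_big).ne' (ne_top_of_le_ne_top hΛα_fin tsub_le_self)
  refine tendsto_measure_nhds_one_of_compl_subset hmiss fun n ω hω =>
    by_contra fun hsmall => hω ?_
  change ¬ε ≤ _ at hsmall
  rw [Measure.restrict_apply (measurable_prodMk_right (hrej n).compl), Set.preimage_compl,
    Set.inter_comm, ← Set.sdiff_eq] at hsmall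
  change α < _
  rw [setIntegral_ite_lt_eq_measureReal (f := fun lam => p n lam ω)
      ((hp_meas n).comp measurable_prodMk_right), measureReal_def,
    ← ENNReal.ofReal_lt_iff_lt_toReal hα.1.le
      (ne_top_of_le_ne_top hΛ_fin (measure_mono Set.inter_subset_right))]
  exact lt_measure_inter_of_measure_sdiff_lt hΛα_sub (not_le.1 hsmall)

/-- If the p-value test is consistent on a subset of Λ of Lebesgue measure strictly
greater than α, then the PVOT test is consistent. -/
theorem pvot_test_consistent
    {Ω : Type*} [MeasurableSpace Ω] (Pr : Measure Ω) [IsProbabilityMeasure Pr]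
    {k : ℕ} (Λ : Set (Fin k → ℝ)) (hΛ : MeasurableSet Λ) (hΛ1 : volume Λ = 1)
    (p : ℕ → (Fin k → ℝ) → Ω → ℝ)
    (hp_meas : ∀ n, Measurable (fun q : (Fin k → ℝ) × Ω => p n q.1 q.2))
    (hp01 : ∀ n lam ω, p n lam ω ∈ Set.Icc (0 : ℝ) 1)
    (α : ℝ) (hα : α ∈ Set.Ioo (0 : ℝ) 1)
    (Λα : Set (Fin k → ℝ)) (hΛα_meas : MeasurableSet Λα) (hΛα_sub : Λα ⊆ Λ)
    (hΛα_big : ENNReal.ofReal α < volume Λα)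
    (hconsistent : ∀ lam ∈ Λα,
      Tendsto (fun n => Pr {ω | p n lam ω < α}) atTop (nhds 1)) :
    Tendsto (fun n => Pr {ω | α < ∫ lam in Λ, (if p n lam ω < α then (1 : ℝ) else 0)})
      atTop (nhds 1) :=
  pvot_test_consistent_general Pr Λ hΛ1 p hp_meas α hα Λα hΛα_meas hΛα_sub hΛα_big hconsistent
end

section
/- Let Λ be a measurable subset of ℝ^k with Lebesgue measure 1, let Z : Λ × Ω → ℝ be a jointly measurable stochastic process with ℙ-almost surely finite values, let c : Λ → ℝ be measurable with inf_{λ∈Λ} c(λ) ≥ c₀ for some constant c₀ > 0, and fix q > 0 and α ∈ (0,1). Then for ℙ-almost every ω, ∫_Λ 1{(Z(λ,ω) + c(λ)·b)² > q} dλ → 1 as b → ∞; consequently the probability that the occupation time exceeds the level converges to one: ℙ( ∫_Λ 1{(Z(λ) + c(λ)·b)² > q} dλ > α ) → 1 as b → ∞. -/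
/-!
For each `λ ∈ Λ` the shifted statistic `Z(λ) + c(λ) b` has slope `c(λ) ≥ c₀ > 0` in `b`, so its
square eventually exceeds `q`. Hence almost every `λ` eventually lies in the rejection set, and
continuity of the measure from below along the increasing sets `{λ | λ stays rejected beyond b}`
makes the occupation time tend to `volume Λ = 1` for every `ω`. The same argument in `ω`, applied
to the events `{occupation time > α}` with `α < 1`, gives the rejection probability tending to one.
-/

open MeasureTheory Filter Topology

theorem eventually_lt_sq_add_mul_atTop {c : ℝ} (hc : 0 < c) (z q : ℝ) :
    ∀ᶠ b in atTop, q < (z + c * b) ^ 2 :=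
  ((tendsto_pow_atTop two_ne_zero).comp
    (tendsto_atTop_add_const_left _ z (tendsto_id.const_mul_atTop hc))).eventually_gt_atTop q

section EventuallyMem

variable {α ι : Type*} [MeasurableSpace α] {μ : Measure α}
  [SemilatticeSup ι] [Nonempty ι] [IsCountablyGenerated (atTop : Filter ι)]

theorem tendsto_measure_univ_of_ae_eventually_mem {s : ι → Set α}
    (h : ∀ᵐ x ∂μ, ∀ᶠ i in atTop, x ∈ s i) :
    Tendsto (fun i => μ (s i)) atTop (𝓝 (μ Set.univ)) := by
  set tail : ι → Set α := fun i => {x | ∀ j ≥ i, x ∈ s j}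
  have tail_mono : Monotone tail := fun i i' hii' x hx j hj => hx j (hii'.trans hj)
  have measure_iUnion_tail : μ (⋃ i, tail i) = μ Set.univ := by
    refine le_antisymm (measure_mono (Set.subset_univ _)) (measure_mono_ae ?_)
    filter_upwards [h] with x hx _
    obtain ⟨i, hi⟩ := eventually_atTop.1 hx
    exact Set.mem_iUnion.2 ⟨i, hi⟩
  refine tendsto_of_tendsto_of_tendsto_of_le_of_le
    (measure_iUnion_tail ▸ tendsto_measure_iUnion_atTop tail_mono) tendsto_const_nhds
    (fun i => measure_mono fun x (hx : x ∈ tail i) => hx i le_rfl)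
    (fun i => measure_mono (Set.subset_univ _))

theorem tendsto_integral_ite_one_zero_of_ae_eventually [IsFiniteMeasure μ]
    {p : ι → α → Prop} [∀ i, DecidablePred (p i)] (hp : ∀ i, MeasurableSet {x | p i x})
    (h : ∀ᵐ x ∂μ, ∀ᶠ i in atTop, p i x) :
    Tendsto (fun i => ∫ x, (if p i x then (1 : ℝ) else 0) ∂μ) atTop (𝓝 (μ.real Set.univ)) := by
  have integral_eq : ∀ i, ∫ x, (if p i x then (1 : ℝ) else 0) ∂μ = μ.real {x | p i x} := by
    intro i
    rw [← integral_indicator_one (hp i)]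
    simp only [Set.indicator_apply, Set.mem_ofPred_eq, Pi.one_apply]
  simp only [integral_eq]
  exact (ENNReal.tendsto_toReal (measure_ne_top μ _)).comp
    (tendsto_measure_univ_of_ae_eventually_mem h)

end EventuallyMem

theorem occupation_time_local_power_to_one_general
    {Ω : Type*} [MeasurableSpace Ω] (Pr : Measure Ω) [IsProbabilityMeasure Pr]
    {k : ℕ} (Λ : Set (Fin k → ℝ)) (hΛ : MeasurableSet Λ) (hΛ1 : volume Λ = 1)
    (Z : (Fin k → ℝ) → Ω → ℝ)
    (hZ_meas : Measurable (fun p : (Fin k → ℝ) × Ω => Z p.1 p.2))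
    (c : (Fin k → ℝ) → ℝ) (hc_meas : Measurable c)
    (c₀ : ℝ) (hc₀ : 0 < c₀) (hc_lb : ∀ lam ∈ Λ, c₀ ≤ c lam)
    (q : ℝ) (α : ℝ) (hα : α ∈ Set.Ioo (0 : ℝ) 1) :
    (∀ᵐ ω ∂Pr,
      Tendsto (fun b : ℝ =>
          ∫ lam in Λ, (if q < (Z lam ω + c lam * b) ^ 2 then (1 : ℝ) else 0))
        atTop (nhds 1)) ∧
    Tendsto (fun b : ℝ =>
        Pr {ω | α < ∫ lam in Λ, (if q < (Z lam ω + c lam * b) ^ 2 then (1 : ℝ) else 0)})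
      atTop (nhds 1) := by
  have : IsFiniteMeasure (volume.restrict Λ) := ⟨by simp [hΛ1]⟩
  have occupation_tendsto : ∀ ω, Tendsto (fun b : ℝ =>
      ∫ lam in Λ, (if q < (Z lam ω + c lam * b) ^ 2 then (1 : ℝ) else 0)) atTop (𝓝 1) := by
    intro ω
    have hvol : (volume.restrict Λ).real Set.univ = 1 := by simp [Measure.real, hΛ1]
    have rejection_set_measurable : ∀ b : ℝ,
        MeasurableSet {lam | q < (Z lam ω + c lam * b) ^ 2} := fun b =>
      measurableSet_lt measurable_const
        ((hZ_meas.of_uncurry_right.add (hc_meas.mul_const b)).pow_const 2)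
    have eventually_rejected : ∀ᵐ lam ∂volume.restrict Λ,
        ∀ᶠ b in atTop, q < (Z lam ω + c lam * b) ^ 2 := by
      filter_upwards [ae_restrict_mem hΛ] with lam hlam
      exact eventually_lt_sq_add_mul_atTop (hc₀.trans_le (hc_lb lam hlam)) _ q
    simpa only [hvol] using
      tendsto_integral_ite_one_zero_of_ae_eventually rejection_set_measurable eventually_rejected
  refine ⟨ae_of_all _ occupation_tendsto, measure_univ (μ := Pr) ▸ ?_⟩
  exact tendsto_measure_univ_of_ae_eventually_mem
    (ae_of_all _ fun ω => (occupation_tendsto ω).eventually_const_lt hα.2)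

/-- If the mean-shift coefficient c(λ) is bounded below by c₀ > 0 on Λ, then the
occupation time ∫_Λ 1{(Z(λ) + c(λ)b)² > q} dλ tends to 1 almost surely as the drift
b → ∞, and consequently the probability that it exceeds the level α tends to one. -/
theorem occupation_time_local_power_to_one
    {Ω : Type*} [MeasurableSpace Ω] (Pr : Measure Ω) [IsProbabilityMeasure Pr]
    {k : ℕ} (Λ : Set (Fin k → ℝ)) (hΛ : MeasurableSet Λ) (hΛ1 : volume Λ = 1)
    (Z : (Fin k → ℝ) → Ω → ℝ)
    (hZ_meas : Measurable (fun p : (Fin k → ℝ) × Ω => Z p.1 p.2))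
    (c : (Fin k → ℝ) → ℝ) (hc_meas : Measurable c)
    (c₀ : ℝ) (hc₀ : 0 < c₀) (hc_lb : ∀ lam ∈ Λ, c₀ ≤ c lam)
    (q : ℝ) (hq : 0 < q) (α : ℝ) (hα : α ∈ Set.Ioo (0 : ℝ) 1) :
    (∀ᵐ ω ∂Pr,
      Tendsto (fun b : ℝ =>
          ∫ lam in Λ, (if q < (Z lam ω + c lam * b) ^ 2 then (1 : ℝ) else 0))
        atTop (nhds 1)) ∧
    Tendsto (fun b : ℝ =>
        Pr {ω | α < ∫ lam in Λ, (if q < (Z lam ω + c lam * b) ^ 2 then (1 : ℝ) else 0)})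
      atTop (nhds 1) :=
  occupation_time_local_power_to_one_general Pr Λ hΛ hΛ1 Z hZ_meas c hc_meas c₀ hc₀ hc_lb q α hα
end
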